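/- Let γ ∈ ℝ and, for ξ = (ξ₁, ξ₂) ∈ [0,π]², set ω(ξ)² = (2 − 2cos ξ₁) + (2 − 2cos ξ₂) and let H(ξ) be the 2×2 matrix with entries H_{jj} = (4ω(ξ)² + 2γ) cos ξ_j + 8 sin²ξ_j and H_{12} = H_{21} = 8 sin ξ₁ sin ξ₂ (the Hessian of ω⁴ + γω²). Then: (i) det H(ξ) = 0 if and only if ξ = (π/2, π/2), or 2ω(ξ)² + γ = 0, or (cos ξ₁ cos ξ₂ ≠ 0 and 8(cos ξ₁ + cos ξ₂) − 4(1/cos ξ₁ + 1/cos ξ₂) = 8 + γ); (ii) H(ξ) is the zero matrix if and only if sin ξ₁ = sin ξ₂ = 0 and 2ω(ξ)² + γ = 0. In particular, H(ξ) = 0 for some ξ ∈ [0,π]² only if γ ∈ {0, −8, −16}, and then exactly at ξ = (0,0) when γ = 0, at ξ ∈ {(0,π), (π,0)} when γ = −8, and at ξ = (π,π) when γ = −16. -/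
import Mathlib


/-- `ω(ξ)² = (2 − 2cos ξ₁) + (2 − 2cos ξ₂)` for `ξ ∈ ℝ²`. -/
noncomputable def w2 (ξ : ℝ × ℝ) : ℝ := (2 - 2 * Real.cos ξ.1) + (2 - 2 * Real.cos ξ.2)

/-- The Hessian matrix of the phase `ω⁴ + γω²` on `ℤ²`. -/
noncomputable def Hess (γ : ℝ) (ξ : ℝ × ℝ) : Matrix (Fin 2) (Fin 2) ℝ :=
  !![(4 * w2 ξ + 2 * γ) * Real.cos ξ.1 + 8 * Real.sin ξ.1 ^ 2,
      8 * Real.sin ξ.1 * Real.sin ξ.2;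
     8 * Real.sin ξ.1 * Real.sin ξ.2,
      (4 * w2 ξ + 2 * γ) * Real.cos ξ.2 + 8 * Real.sin ξ.2 ^ 2]

/-- The square `[0,π]²`. -/
noncomputable def box : Set (ℝ × ℝ) := Set.Icc (0 : ℝ) Real.pi ×ˢ Set.Icc (0 : ℝ) Real.pi

lemma sinz {x : ℝ} (hx : x ∈ Set.Icc 0 Real.pi) :
    Real.sin x = 0 ↔ x = 0 ∨ x = Real.pi := by
  constructor
  · intro h
    by_contra hcon
    push_neg at hcon
    have h1 : 0 < x := lt_of_le_of_ne hx.1 (Ne.symm hcon.1)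
    have h2 : x < Real.pi := lt_of_le_of_ne hx.2 hcon.2
    exact absurd h (ne_of_gt (Real.sin_pos_of_pos_of_lt_pi h1 h2))
  · rintro (rfl | rfl) <;> simp

lemma cosz {x : ℝ} (hx : x ∈ Set.Icc 0 Real.pi) :
    Real.cos x = 0 ↔ x = Real.pi / 2 := by
  constructor
  · intro h
    refine Real.injOn_cos hx ⟨by positivity, by linarith [Real.pi_pos]⟩ ?_
    rw [h, Real.cos_pi_div_two]
  · rintro rfl; exact Real.cos_pi_div_two

lemma detEq (γ : ℝ) (ξ : ℝ × ℝ) :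
    (Hess γ ξ).det = (4 * w2 ξ + 2 * γ) *
      ((4 * w2 ξ + 2 * γ) * (Real.cos ξ.1 * Real.cos ξ.2)
        + 8 * (Real.cos ξ.1 + Real.cos ξ.2) * (1 - Real.cos ξ.1 * Real.cos ξ.2)) := by
  have h1 := Real.sin_sq_add_cos_sq ξ.1
  have h2 := Real.sin_sq_add_cos_sq ξ.2
  simp [Hess, Matrix.det_fin_two_of]
  linear_combination 8*(4*w2 ξ+2*γ)*Real.cos ξ.1 * h2 + 8*(4*w2 ξ+2*γ)*Real.cos ξ.2 * h1

lemma hessZero (γ : ℝ) (ξ : ℝ × ℝ) (hξ : ξ ∈ box) :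
    Hess γ ξ = 0 ↔ Real.sin ξ.1 = 0 ∧ Real.sin ξ.2 = 0 ∧ 2 * w2 ξ + γ = 0 := by
  obtain ⟨h1, h2⟩ := hξ
  constructor
  · intro h
    have e00 := congrFun (congrFun h 0) 0
    have e01 := congrFun (congrFun h 0) 1
    have e11 := congrFun (congrFun h 1) 1
    simp [Hess] at e00 e01 e11
    have hs : Real.sin ξ.1 = 0 ∨ Real.sin ξ.2 = 0 := e01
    have key : ∀ a b : ℝ, Real.sin a = 0 →
        (4 * w2 ξ + 2 * γ) * Real.cos a + 8 * Real.sin a ^ 2 = 0 →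
        Real.sin a ^ 2 + Real.cos a ^ 2 = 1 →
        4 * w2 ξ + 2 * γ = 0 := by
      intro a b hsa hea hpa
      have hca : Real.cos a ≠ 0 := by
        intro hc; rw [hsa, hc] at hpa; norm_num at hpa
      have : (4 * w2 ξ + 2 * γ) * Real.cos a = 0 := by rw [hsa] at hea; linarith
      exact (mul_eq_zero.1 this).resolve_right hca
    rcases hs with hs1 | hs2
    · have hA := key ξ.1 ξ.1 hs1 (by linarith [e00]) (Real.sin_sq_add_cos_sq ξ.1)
      have hs2 : Real.sin ξ.2 = 0 := by
        rw [hA] at e11; simpa using e11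
      exact ⟨hs1, hs2, by linarith⟩
    · have hA := key ξ.2 ξ.2 hs2 (by linarith [e11]) (Real.sin_sq_add_cos_sq ξ.2)
      have hs1 : Real.sin ξ.1 = 0 := by
        rw [hA] at e00; simpa using e00
      exact ⟨hs1, hs2, by linarith⟩
  · rintro ⟨hs1, hs2, hA⟩
    ext i j
    fin_cases i <;> fin_cases j <;>
      simp [Hess, hs1, hs2] <;> exact Or.inl (by linarith)

lemma detIff (γ : ℝ) (ξ : ℝ × ℝ) (hξ : ξ ∈ box) :
    (Hess γ ξ).det = 0 ↔
      ξ = (Real.pi / 2, Real.pi / 2) ∨ 2 * w2 ξ + γ = 0 ∨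
        (Real.cos ξ.1 * Real.cos ξ.2 ≠ 0 ∧
          8 * (Real.cos ξ.1 + Real.cos ξ.2)
            - 4 * (1 / Real.cos ξ.1 + 1 / Real.cos ξ.2) = 8 + γ) := by
  obtain ⟨h1, h2⟩ := hξ
  rw [detEq, mul_eq_zero]
  set c1 := Real.cos ξ.1 with hc1
  set c2 := Real.cos ξ.2 with hc2
  constructor
  · rintro (hA | hB)
    · exact Or.inr (Or.inl (by linarith))
    · by_cases hc : c1 * c2 = 0
      · have hsum : c1 + c2 = 0 := by
          have : 8 * (c1 + c2) * (1 - c1 * c2) = 0 := by rw [hc] at hB ⊢; linarith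
          rw [hc] at this; nlinarith
        have hcc : c1 = 0 ∧ c2 = 0 := by
          rcases mul_eq_zero.1 hc with h | h
          · exact ⟨h, by linarith⟩
          · exact ⟨by linarith, h⟩
        left
        have e1 := (cosz h1).1 hcc.1
        have e2 := (cosz h2).1 hcc.2
        exact Prod.ext e1 e2
      · refine Or.inr (Or.inr ⟨hc, ?_⟩)
        have hw : w2 ξ = 4 - 2 * c1 - 2 * c2 := by simp [w2, ← hc1, ← hc2]; ring
        rw [hw] at hB
        have h1' : c1 ≠ 0 := fun h => hc (by rw [h]; ring)
        have h2' : c2 ≠ 0 := fun h => hc (by rw [h]; ring)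
        field_simp
        linear_combination (-(1:ℝ)/2) * hB
  · rintro (heq | hA | ⟨hc, hE⟩)
    · right
      have : c1 = 0 ∧ c2 = 0 := by
        rw [heq] at hc1 hc2; simp [hc1, hc2]
      rw [this.1, this.2]; ring
    · left; linarith
    · right
      have hw : w2 ξ = 4 - 2 * c1 - 2 * c2 := by simp [w2, ← hc1, ← hc2]; ring
      rw [hw]
      have h1' : c1 ≠ 0 := fun h => hc (by rw [h]; ring)
      have h2' : c2 ≠ 0 := fun h => hc (by rw [h]; ring)
      field_simp at hE
      linear_combination (-2:ℝ) * hE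

lemma corner (γ : ℝ) (ξ : ℝ × ℝ) (hξ : ξ ∈ box) (h : Hess γ ξ = 0) :
    (ξ = (0, 0) ∧ γ = 0) ∨ (ξ = (0, Real.pi) ∧ γ = -8) ∨
      (ξ = (Real.pi, 0) ∧ γ = -8) ∨ (ξ = (Real.pi, Real.pi) ∧ γ = -16) := by
  obtain ⟨hs1, hs2, hA⟩ := (hessZero γ ξ hξ).1 h
  obtain ⟨h1, h2⟩ := hξ
  have hw : w2 ξ = 4 - 2 * Real.cos ξ.1 - 2 * Real.cos ξ.2 := by simp [w2]; ring
  rcases (sinz h1).1 hs1 with e1 | e1 <;> rcases (sinz h2).1 hs2 with e2 | e2 <;>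
    [left; (right;left); (right;right;left); (right;right;right)] <;>
    refine ⟨Prod.ext e1 e2, ?_⟩ <;>
    rw [hw, e1, e2] at hA <;> simp [Real.cos_pi] at hA <;> linarith

lemma hessAt (γ : ℝ) (a b : ℝ) (ha : a = 0 ∨ a = Real.pi) (hb : b = 0 ∨ b = Real.pi)
    (hγ : 2 * w2 (a, b) + γ = 0) : Hess γ (a, b) = 0 := by
  have hI : ∀ x : ℝ, x = 0 ∨ x = Real.pi → x ∈ Set.Icc (0:ℝ) Real.pi := by
    rintro x (rfl | rfl) <;> constructor <;> linarith [Real.pi_pos]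
  have hbox : (a, b) ∈ box := ⟨hI a ha, hI b hb⟩
  refine (hessZero γ (a, b) hbox).2 ⟨?_, ?_, hγ⟩ <;>
    [rcases ha with rfl|rfl; rcases hb with rfl|rfl] <;> simp


theorem stmt8' :
    (∀ γ : ℝ, ∀ ξ ∈ box,
      ((Hess γ ξ).det = 0 ↔
        ξ = (Real.pi / 2, Real.pi / 2) ∨ 2 * w2 ξ + γ = 0 ∨
          (Real.cos ξ.1 * Real.cos ξ.2 ≠ 0 ∧
            8 * (Real.cos ξ.1 + Real.cos ξ.2)
              - 4 * (1 / Real.cos ξ.1 + 1 / Real.cos ξ.2) = 8 + γ)) ∧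
      (Hess γ ξ = 0 ↔ Real.sin ξ.1 = 0 ∧ Real.sin ξ.2 = 0 ∧ 2 * w2 ξ + γ = 0)) ∧
    (∀ γ : ℝ, (∃ ξ ∈ box, Hess γ ξ = 0) → γ = 0 ∨ γ = -8 ∨ γ = -16) ∧
    (∀ ξ ∈ box, (Hess 0 ξ = 0 ↔ ξ = (0, 0))) ∧
    (∀ ξ ∈ box, (Hess (-8) ξ = 0 ↔ ξ = (0, Real.pi) ∨ ξ = (Real.pi, 0))) ∧
    (∀ ξ ∈ box, (Hess (-16) ξ = 0 ↔ ξ = (Real.pi, Real.pi))) := by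
  have pi0 := Real.pi_pos
  refine ⟨fun γ ξ hξ => ⟨detIff γ ξ hξ, hessZero γ ξ hξ⟩, ?_, ?_, ?_, ?_⟩
  · rintro γ ⟨ξ, hξ, h⟩
    rcases corner γ ξ hξ h with ⟨_, hγ⟩ | ⟨_, hγ⟩ | ⟨_, hγ⟩ | ⟨_, hγ⟩ <;> tauto
  · intro ξ hξ
    constructor
    · intro h
      rcases corner 0 ξ hξ h with ⟨he, _⟩ | ⟨_, hγ⟩ | ⟨_, hγ⟩ | ⟨_, hγ⟩ <;>
        first | exact he | norm_num at hγ
    · rintro rfl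
      exact hessAt 0 0 0 (Or.inl rfl) (Or.inl rfl) (by simp [w2])
  · intro ξ hξ
    constructor
    · intro h
      rcases corner (-8) ξ hξ h with ⟨_, hγ⟩ | ⟨he, _⟩ | ⟨he, _⟩ | ⟨_, hγ⟩ <;>
        first | exact Or.inl he | exact Or.inr he | norm_num at hγ
    · rintro (rfl | rfl)
      · exact hessAt (-8) 0 Real.pi (Or.inl rfl) (Or.inr rfl) (by simp [w2]; ring)
      · exact hessAt (-8) Real.pi 0 (Or.inr rfl) (Or.inl rfl) (by simp [w2]; ring)
  · intro ξ hξ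
    constructor
    · intro h
      rcases corner (-16) ξ hξ h with ⟨_, hγ⟩ | ⟨_, hγ⟩ | ⟨_, hγ⟩ | ⟨he, _⟩ <;>
        first | exact he | norm_num at hγ
    · rintro rfl
      exact hessAt (-16) Real.pi Real.pi (Or.inr rfl) (Or.inr rfl) (by simp [w2]; ring)

/-- Characterization of degenerate critical points of the phase `ω⁴ + γω²` on `ℤ²`:
(i) the vanishing of `det Hess`, (ii) the vanishing of `Hess`, and in particular the
values of `γ` and the points at which the Hessian vanishes completely. -/
theorem stmt8 :
    (∀ γ : ℝ, ∀ ξ ∈ box,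
      ((Hess γ ξ).det = 0 ↔
        ξ = (Real.pi / 2, Real.pi / 2) ∨ 2 * w2 ξ + γ = 0 ∨
          (Real.cos ξ.1 * Real.cos ξ.2 ≠ 0 ∧
            8 * (Real.cos ξ.1 + Real.cos ξ.2)
              - 4 * (1 / Real.cos ξ.1 + 1 / Real.cos ξ.2) = 8 + γ)) ∧
      (Hess γ ξ = 0 ↔ Real.sin ξ.1 = 0 ∧ Real.sin ξ.2 = 0 ∧ 2 * w2 ξ + γ = 0)) ∧
    (∀ γ : ℝ, (∃ ξ ∈ box, Hess γ ξ = 0) → γ = 0 ∨ γ = -8 ∨ γ = -16) ∧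
    (∀ ξ ∈ box, (Hess 0 ξ = 0 ↔ ξ = (0, 0))) ∧
    (∀ ξ ∈ box, (Hess (-8) ξ = 0 ↔ ξ = (0, Real.pi) ∨ ξ = (Real.pi, 0))) ∧
    (∀ ξ ∈ box, (Hess (-16) ξ = 0 ↔ ξ = (Real.pi, Real.pi))) := by
  exact stmt8'
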